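/- Let K and K̃ be symmetric PSD n×n matrices, λ > 0, ε ≥ 0, and suppose K − K̃ ⪯ λε·I (i.e., λε·I − (K − K̃) is PSD) and K̃ − K ⪯ λε·I. Let z ∈ ℝⁿ, α_opt = (K + λI)⁻¹z and α̂ = (K̃ + λI)⁻¹z. Then ‖α̂ − α_opt‖₂ ≤ ε‖α_opt‖₂. -/

import Mathlib

open Matrix

/-!
The resolvent identity gives `(K̃ + λI)(α̂ - α) = (K - K̃)α`. As `K̃` is PSD,
`‖(K̃ + λI)w‖ ≥ λ‖w‖`; and the two-sided bound `-λεI ⪯ K - K̃ ⪯ λεI` gives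
`‖(K - K̃)α‖ ≤ λε‖α‖`, because `(λε)²I - (K - K̃)² = (λεI - (K - K̃))(λεI + (K - K̃))`
is a product of commuting PSD matrices, hence PSD.
-/

namespace Matrix

variable {n : Type*}

theorem PosSemidef.posDef_add_smul_one [DecidableEq n] {K : Matrix n n ℝ} (hK : K.PosSemidef)
    {lam : ℝ} (hlam : 0 < lam) : (K + lam • 1).PosDef :=
  PosDef.posSemidef_add hK (PosDef.one.smul hlam)

section

variable [Fintype n]

theorem dotProduct_self_eq_sum_sq (v : n → ℝ) : v ⬝ᵥ v = ∑ i, v i ^ 2 := by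
  simp only [dotProduct, sq]

theorem mulVec_sub_eq_sub_mulVec {m R : Type*} [Ring R] {A B : Matrix m n R} {x y : n → R}
    {z : m → R} (hx : A *ᵥ x = z) (hy : B *ᵥ y = z) : B *ᵥ (y - x) = (A - B) *ᵥ x := by
  rw [mulVec_sub, sub_mulVec, hx, hy]

variable [DecidableEq n]

theorem mulVec_nonsing_inv_mulVec {R : Type*} [CommRing R] {A : Matrix n n R} (hA : IsUnit A)
    (z : n → R) : A *ᵥ (A⁻¹ *ᵥ z) = z := by
  rw [mulVec_mulVec, mul_nonsing_inv A ((isUnit_iff_isUnit_det A).mp hA), one_mulVec]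

open scoped MatrixOrder in
theorem PosSemidef.sq_smul_one_sub_mul_self {M : Matrix n n ℝ} {c : ℝ}
    (h₁ : (c • 1 - M).PosSemidef) (h₂ : (c • 1 + M).PosSemidef) :
    (c ^ 2 • 1 - M * M).PosSemidef := by
  have hcomm : Commute (c • 1 - M) (c • 1 + M) :=
    ((Commute.one_left _).smul_left c).sub_left
      (((Commute.one_left M).smul_left c).symm.add_right (Commute.refl M))
  have hprod : (c • 1 - M) * (c • 1 + M) = c ^ 2 • 1 - M * M := by
    simp only [sub_mul, mul_add, one_mul, mul_one, smul_mul_assoc, mul_smul_comm]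
    module
  rw [← hprod]
  exact (hcomm.mul_nonneg h₁.nonneg h₂.nonneg).posSemidef

theorem mulVec_dotProduct_mulVec_self_le {M : Matrix n n ℝ} {c : ℝ}
    (h₁ : (c • 1 - M).PosSemidef) (h₂ : (c • 1 + M).PosSemidef) (v : n → ℝ) :
    M *ᵥ v ⬝ᵥ M *ᵥ v ≤ c ^ 2 * (v ⬝ᵥ v) := by
  have hM : Mᵀ = M := by
    simpa using ((isHermitian_one.smul (IsSelfAdjoint.all c)).sub h₁.isHermitian).eq
  have h := (PosSemidef.sq_smul_one_sub_mul_self h₁ h₂).dotProduct_mulVec_nonneg v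
  rw [star_trivial, sub_mulVec, smul_mulVec, one_mulVec, dotProduct_sub, dotProduct_smul,
    ← mulVec_mulVec, dotProduct_mulVec, ← mulVec_transpose, hM, smul_eq_mul, sub_nonneg] at h
  rwa [dotProduct_comm]

theorem PosSemidef.sq_mul_dotProduct_self_le {K : Matrix n n ℝ} (hK : K.PosSemidef) {lam : ℝ}
    (hlam : 0 ≤ lam) (w : n → ℝ) :
    lam ^ 2 * (w ⬝ᵥ w) ≤ (K + lam • 1) *ᵥ w ⬝ᵥ (K + lam • 1) *ᵥ w := by
  have hKw : 0 ≤ w ⬝ᵥ K *ᵥ w := by simpa using hK.dotProduct_mulVec_nonneg w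
  have hsq : 0 ≤ K *ᵥ w ⬝ᵥ K *ᵥ w := by simpa using dotProduct_star_self_nonneg (K *ᵥ w)
  have hexpand : (K + lam • 1) *ᵥ w ⬝ᵥ (K + lam • 1) *ᵥ w
      = K *ᵥ w ⬝ᵥ K *ᵥ w + 2 * lam * (w ⬝ᵥ K *ᵥ w) + lam ^ 2 * (w ⬝ᵥ w) := by
    simp only [add_mulVec, smul_mulVec, one_mulVec, dotProduct_add, add_dotProduct,
      smul_dotProduct, dotProduct_smul, smul_eq_mul, dotProduct_comm (K *ᵥ w) w]
    ring
  rw [hexpand]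
  nlinarith

end

end Matrix

/-- Spectral approximation gives a (1+ε)-approximate KRR solution. -/
theorem stmt_1 (n : ℕ) (K Kt : Matrix (Fin n) (Fin n) ℝ)
    (hK : K.PosSemidef) (hKt : Kt.PosSemidef)
    (lam ε : ℝ) (hlam : 0 < lam) (hε : 0 ≤ ε)
    (h1 : ((lam * ε) • (1 : Matrix (Fin n) (Fin n) ℝ) - (K - Kt)).PosSemidef)
    (h2 : ((lam * ε) • (1 : Matrix (Fin n) (Fin n) ℝ) - (Kt - K)).PosSemidef)
    (z : Fin n → ℝ)
    (αopt αhat : Fin n → ℝ)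
    (hopt : αopt = (K + lam • (1 : Matrix (Fin n) (Fin n) ℝ))⁻¹.mulVec z)
    (hhat : αhat = (Kt + lam • (1 : Matrix (Fin n) (Fin n) ℝ))⁻¹.mulVec z) :
    Real.sqrt (∑ i, (αhat i - αopt i) ^ 2) ≤ ε * Real.sqrt (∑ i, αopt i ^ 2) := by
  have hsolve : (K + lam • 1) *ᵥ αopt = z :=
    hopt ▸ mulVec_nonsing_inv_mulVec (hK.posDef_add_smul_one hlam).isUnit z
  have hsolve' : (Kt + lam • 1) *ᵥ αhat = z :=
    hhat ▸ mulVec_nonsing_inv_mulVec (hKt.posDef_add_smul_one hlam).isUnit z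
  have hresolvent : (Kt + lam • 1) *ᵥ (αhat - αopt) = (K - Kt) *ᵥ αopt := by
    rw [mulVec_sub_eq_sub_mulVec hsolve hsolve', add_sub_add_right_eq_sub]
  rw [← neg_sub K Kt, sub_neg_eq_add] at h2
  have hsq : lam ^ 2 * ((αhat - αopt) ⬝ᵥ (αhat - αopt)) ≤ lam ^ 2 * (ε ^ 2 * (αopt ⬝ᵥ αopt)) :=
    calc _ ≤ (Kt + lam • 1) *ᵥ (αhat - αopt) ⬝ᵥ (Kt + lam • 1) *ᵥ (αhat - αopt) :=
          hKt.sq_mul_dotProduct_self_le hlam.le _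
      _ = (K - Kt) *ᵥ αopt ⬝ᵥ (K - Kt) *ᵥ αopt := by rw [hresolvent]
      _ ≤ (lam * ε) ^ 2 * (αopt ⬝ᵥ αopt) := mulVec_dotProduct_mulVec_self_le h1 h2 αopt
      _ = lam ^ 2 * (ε ^ 2 * (αopt ⬝ᵥ αopt)) := by ring
  have hle := le_of_mul_le_mul_left hsq (by positivity)
  rw [dotProduct_self_eq_sum_sq, dotProduct_self_eq_sum_sq] at hle
  calc √(∑ i, (αhat i - αopt i) ^ 2) ≤ √(ε ^ 2 * ∑ i, αopt i ^ 2) := Real.sqrt_le_sqrt hle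
    _ = ε * √(∑ i, αopt i ^ 2) := by rw [Real.sqrt_mul (sq_nonneg ε), Real.sqrt_sq hε]
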